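/- Let f, a be smooth on (0,∞) with f, f', 1-a > 0, let λ > 1, and suppose q(r) = n(1-a(r))f(r)/(r f'(r)) > 1 for all r (which holds for the n-vortex with λ > 1). Let L_m = F̃_m* F̃_m + J M_m with J = diag(1,0,0,0), and suppose M₁ ≤ 0 with M_m - M₁ = (1-q²)(m²-1)/r² < 0 as a multiplication operator for m ≥ 2. Then for any vector of the form W̃ = (w₁, w₂, w₃, w₄) with F̃_m W̃ = 0 and w₁ ≢ 0, one has ⟨W̃, L_m W̃⟩ = ⟨w₁, M_m w₁⟩ < 0, so L_m has a negative eigenvalue. -/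

import Mathlib

open Set MeasureTheory

/-- The measure `r dr` on `(0,∞)`. -/
noncomputable def rmeasure : Measure ℝ :=
  (volume.restrict (Set.Ioi (0:ℝ))).withDensity fun r => ENNReal.ofReal r

/-!
Since `F̃_m W̃ = 0`, the term `F̃_m* F̃_m` contributes nothing, and `⟨W̃, L_m W̃⟩` reduces to
`⟨w₁, M₁ w₁⟩ + ∫ (1 - q²)(m² - 1)/r² w₁² r dr`. The first summand is `≤ 0`. The second is `< 0`:
its integrand is `≤ 0` on `(0,∞)` and strictly negative on the open set where the continuous
function `w₁` does not vanish, and nonempty open subsets of `(0,∞)` have positive `r dr`-measure.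
-/

lemma rmeasure_ae_mem_Ioi : ∀ᵐ r ∂rmeasure, r ∈ Ioi (0:ℝ) :=
  (withDensity_absolutelyContinuous _ _).ae_le (ae_restrict_mem measurableSet_Ioi)

lemma rmeasure_pos_of_isOpen {U : Set ℝ} (hU : IsOpen U) (hne : (U ∩ Ioi 0).Nonempty) :
    0 < rmeasure U := by
  have hset : {r : ℝ | ENNReal.ofReal r ≠ 0} ∩ U ∩ Ioi 0 = U ∩ Ioi 0 := by
    ext r
    simp +contextual [and_comm]
  rw [pos_iff_ne_zero, rmeasure, Ne, withDensity_apply_eq_zero' (by fun_prop),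
    Measure.restrict_apply' measurableSet_Ioi, hset]
  exact ((hU.inter isOpen_Ioi).measure_pos volume hne).ne'

theorem integral_mul_sq_neg {c w : ℝ → ℝ} (hc : ∀ r ∈ Ioi (0:ℝ), c r < 0)
    (hw : ContinuousOn w (Ioi 0)) (hw0 : ∃ r ∈ Ioi (0:ℝ), w r ≠ 0)
    (hint : Integrable (fun r => c r * w r ^ 2) rmeasure) :
    ∫ r, c r * w r ^ 2 ∂rmeasure < 0 := by
  rw [← neg_pos, ← integral_neg]
  have hnonneg : 0 ≤ᵐ[rmeasure] fun r => -(c r * w r ^ 2) := by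
    filter_upwards [rmeasure_ae_mem_Ioi] with r hr
    exact neg_nonneg.mpr (mul_nonpos_of_nonpos_of_nonneg (hc r hr).le (sq_nonneg _))
  have hsupp : Ioi 0 ∩ w ⁻¹' {0}ᶜ ⊆ Function.support fun r => -(c r * w r ^ 2) :=
    fun r ⟨hr, hwr⟩ => neg_ne_zero.mpr (mul_ne_zero (hc r hr).ne (pow_ne_zero 2 hwr))
  have hopen : IsOpen (Ioi 0 ∩ w ⁻¹' {0}ᶜ) :=
    hw.isOpen_inter_preimage isOpen_Ioi isOpen_compl_singleton
  obtain ⟨r, hr, hwr⟩ := hw0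
  exact (integral_pos_iff_support_of_nonneg_ae hnonneg hint.neg).mpr
    ((rmeasure_pos_of_isOpen hopen ⟨r, ⟨hr, hwr⟩, hr⟩).trans_le (measure_mono hsupp))

theorem integral_mul_add_mul_neg {c w v : ℝ → ℝ} (hv : ∫ r, w r * v r ∂rmeasure ≤ 0)
    (hc : ∀ r ∈ Ioi (0:ℝ), c r < 0) (hw : ContinuousOn w (Ioi 0))
    (hw0 : ∃ r ∈ Ioi (0:ℝ), w r ≠ 0)
    (hint_v : Integrable (fun r => w r * v r) rmeasure)
    (hint_c : Integrable (fun r => c r * w r ^ 2) rmeasure) :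
    ∫ r, w r * (v r + c r * w r) ∂rmeasure < 0 := by
  have hsplit : ∫ r, w r * (v r + c r * w r) ∂rmeasure
      = (∫ r, w r * v r ∂rmeasure) + ∫ r, c r * w r ^ 2 ∂rmeasure := by
    rw [← integral_add hint_v hint_c]
    congr 1 with r
    ring
  linarith [integral_mul_sq_neg hc hw hw0 hint_c]

lemma one_sub_sq_mul_sq_sub_one_div_sq_neg {q m r : ℝ} (hq : 1 < q) (hm : 1 < m) (hr : r ≠ 0) :
    (1 - q ^ 2) * (m ^ 2 - 1) / r ^ 2 < 0 :=
  div_neg_of_neg_of_pos (mul_neg_of_neg_of_pos (by nlinarith) (by nlinarith)) (by positivity)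

theorem stmt18_general (n : ℕ) (m : ℕ) (hm : 2 ≤ m)
    (f a : ℝ → ℝ)
    -- q(r) = n(1-a)f/(r f') > 1 on (0,∞) (the case λ > 1):
    (hq : ∀ r ∈ Ioi (0:ℝ), 1 < (n:ℝ) * (1 - a r) * f r / (r * deriv f r))
    -- M₁ is a non-positive operator w.r.t. the L²(r dr) pairing:
    (M1 : (ℝ → ℝ) →ₗ[ℝ] (ℝ → ℝ))
    (hM1 : ∀ u : ℝ → ℝ, (∫ r, u r * M1 u r ∂rmeasure) ≤ 0)
    -- F̃_m and its formal adjoint F̃_m*: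
    (Fm Fstar : (ℝ → Fin 4 → ℝ) →ₗ[ℝ] (ℝ → Fin 4 → ℝ))
    -- the test vector W̃, annihilated by F̃_m, with nontrivial first component w₁:
    (Wt : ℝ → Fin 4 → ℝ) (hFW : Fm Wt = 0)
    (hw1ne : ∃ r ∈ Ioi (0:ℝ), Wt r 0 ≠ 0)
    (hw1cont : ContinuousOn (fun r => Wt r 0) (Ioi 0))
    -- integrability of the relevant pairings:
    (hint1 : Integrable (fun r => Wt r 0 * M1 (fun s => Wt s 0) r) rmeasure)
    (hint2 : Integrable (fun r =>
      (1 - ((n:ℝ) * (1 - a r) * f r / (r * deriv f r))^2) * ((m:ℝ)^2 - 1) / r^2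
        * (Wt r 0)^2) rmeasure) :
    -- ⟨W̃, L_m W̃⟩ = ⟨w₁, M_m w₁⟩:
    ((∫ r, (∑ k, Wt r k * (Fstar (Fm Wt) r k
        + (if k = (0 : Fin 4) then
            M1 (fun s => Wt s 0) r
              + (1 - ((n:ℝ) * (1 - a r) * f r / (r * deriv f r))^2)
                * ((m:ℝ)^2 - 1) / r^2 * Wt r 0
          else 0))) ∂rmeasure)
      = ∫ r, (Wt r 0 * (M1 (fun s => Wt s 0) r
          + (1 - ((n:ℝ) * (1 - a r) * f r / (r * deriv f r))^2)
            * ((m:ℝ)^2 - 1) / r^2 * Wt r 0)) ∂rmeasure) ∧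
    -- and this quantity is strictly negative:
    ((∫ r, (Wt r 0 * (M1 (fun s => Wt s 0) r
        + (1 - ((n:ℝ) * (1 - a r) * f r / (r * deriv f r))^2)
          * ((m:ℝ)^2 - 1) / r^2 * Wt r 0)) ∂rmeasure) < 0) ∧
    -- so the quadratic form of L_m has a negative direction:
    (∃ W : ℝ → Fin 4 → ℝ, (∃ r ∈ Ioi (0:ℝ), W r ≠ 0) ∧
      (∫ r, (∑ k, W r k * (Fstar (Fm W) r k
        + (if k = (0 : Fin 4) then
            M1 (fun s => W s 0) r
              + (1 - ((n:ℝ) * (1 - a r) * f r / (r * deriv f r))^2)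
                * ((m:ℝ)^2 - 1) / r^2 * W r 0
          else 0))) ∂rmeasure) < 0) := by
  have hform : (∫ r, (∑ k, Wt r k * (Fstar (Fm Wt) r k
        + (if k = (0 : Fin 4) then
            M1 (fun s => Wt s 0) r
              + (1 - ((n:ℝ) * (1 - a r) * f r / (r * deriv f r))^2)
                * ((m:ℝ)^2 - 1) / r^2 * Wt r 0
          else 0))) ∂rmeasure)
      = ∫ r, (Wt r 0 * (M1 (fun s => Wt s 0) r
          + (1 - ((n:ℝ) * (1 - a r) * f r / (r * deriv f r))^2)
            * ((m:ℝ)^2 - 1) / r^2 * Wt r 0)) ∂rmeasure := by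
    simp only [hFW, map_zero, Pi.zero_apply, zero_add, mul_ite, mul_zero, Finset.sum_ite_eq',
      Finset.mem_univ, if_true]
  have hneg := integral_mul_add_mul_neg (hM1 _)
    (fun r hr => one_sub_sq_mul_sq_sub_one_div_sq_neg (hq r hr) (Nat.one_lt_cast.mpr hm)
      (ne_of_gt hr)) hw1cont hw1ne hint1 hint2
  refine ⟨hform, hneg, Wt, ?_, hform ▸ hneg⟩
  obtain ⟨r, hr, hw1r⟩ := hw1ne
  exact ⟨r, hr, fun h => hw1r (congrFun h 0)⟩

/-- the instability mechanism for higher-degree vortices. With `λ > 1`,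
`q > 1`, `L_m = F̃_m* F̃_m + J M_m`, `J = diag(1,0,0,0)`, `M₁ ≤ 0` and
`M_m - M₁ = (1-q²)(m²-1)/r² < 0` for `m ≥ 2`: any `W̃` with `F̃_m W̃ = 0` and first
component `w₁ ≢ 0` satisfies `⟨W̃, L_m W̃⟩ = ⟨w₁, M_m w₁⟩ < 0`, so the quadratic form of
`L_m` has a negative direction. -/
theorem stmt18 (n : ℕ) (hn : 2 ≤ n) (m : ℕ) (hm : 2 ≤ m) (lam : ℝ) (hlam : 1 < lam)
    (f a : ℝ → ℝ)
    (hf : ∀ r ∈ Ioi (0:ℝ), 0 < f r)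
    (hf' : ∀ r ∈ Ioi (0:ℝ), 0 < deriv f r)
    (ha : ∀ r ∈ Ioi (0:ℝ), a r < 1)
    -- q(r) = n(1-a)f/(r f') > 1 on (0,∞) (the case λ > 1):
    (hq : ∀ r ∈ Ioi (0:ℝ), 1 < (n:ℝ) * (1 - a r) * f r / (r * deriv f r))
    -- M₁ is a non-positive operator w.r.t. the L²(r dr) pairing:
    (M1 : (ℝ → ℝ) →ₗ[ℝ] (ℝ → ℝ))
    (hM1 : ∀ u : ℝ → ℝ, (∫ r, u r * M1 u r ∂rmeasure) ≤ 0)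
    -- F̃_m and its formal adjoint F̃_m*:
    (Fm Fstar : (ℝ → Fin 4 → ℝ) →ₗ[ℝ] (ℝ → Fin 4 → ℝ))
    (hadj : ∀ U W : ℝ → Fin 4 → ℝ,
      (∫ r, (∑ k, Fm U r k * W r k) ∂rmeasure)
        = ∫ r, (∑ k, U r k * Fstar W r k) ∂rmeasure)
    -- the test vector W̃, annihilated by F̃_m, with nontrivial first component w₁:
    (Wt : ℝ → Fin 4 → ℝ) (hFW : Fm Wt = 0)
    (hw1ne : ∃ r ∈ Ioi (0:ℝ), Wt r 0 ≠ 0)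
    (hw1cont : ContinuousOn (fun r => Wt r 0) (Ioi 0))
    -- integrability of the relevant pairings:
    (hint1 : Integrable (fun r => Wt r 0 * M1 (fun s => Wt s 0) r) rmeasure)
    (hint2 : Integrable (fun r =>
      (1 - ((n:ℝ) * (1 - a r) * f r / (r * deriv f r))^2) * ((m:ℝ)^2 - 1) / r^2
        * (Wt r 0)^2) rmeasure) :
    -- ⟨W̃, L_m W̃⟩ = ⟨w₁, M_m w₁⟩:
    ((∫ r, (∑ k, Wt r k * (Fstar (Fm Wt) r k
        + (if k = (0 : Fin 4) then
            M1 (fun s => Wt s 0) r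
              + (1 - ((n:ℝ) * (1 - a r) * f r / (r * deriv f r))^2)
                * ((m:ℝ)^2 - 1) / r^2 * Wt r 0
          else 0))) ∂rmeasure)
      = ∫ r, (Wt r 0 * (M1 (fun s => Wt s 0) r
          + (1 - ((n:ℝ) * (1 - a r) * f r / (r * deriv f r))^2)
            * ((m:ℝ)^2 - 1) / r^2 * Wt r 0)) ∂rmeasure) ∧
    -- and this quantity is strictly negative:
    ((∫ r, (Wt r 0 * (M1 (fun s => Wt s 0) r
        + (1 - ((n:ℝ) * (1 - a r) * f r / (r * deriv f r))^2)
          * ((m:ℝ)^2 - 1) / r^2 * Wt r 0)) ∂rmeasure) < 0) ∧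
    -- so the quadratic form of L_m has a negative direction:
    (∃ W : ℝ → Fin 4 → ℝ, (∃ r ∈ Ioi (0:ℝ), W r ≠ 0) ∧
      (∫ r, (∑ k, W r k * (Fstar (Fm W) r k
        + (if k = (0 : Fin 4) then
            M1 (fun s => W s 0) r
              + (1 - ((n:ℝ) * (1 - a r) * f r / (r * deriv f r))^2)
                * ((m:ℝ)^2 - 1) / r^2 * W r 0
          else 0))) ∂rmeasure) < 0) :=
  stmt18_general n m hm f a hq M1 hM1 Fm Fstar Wt hFW hw1ne hw1cont hint1 hint2
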